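/- For a Poisson random variable Λ with mean ν t, where ν t ≥ 1, ℙ(Λ = ⌊νt⌋) ≥ 1/(9⌊νt⌋). -/

import Mathlib

/-!
With `n = ⌊λ⌋` we have `n ≤ λ < n + 1`, so `λⁿ ≥ nⁿ` and `e^{-λ} > e^{-(n+1)}`. Since Stirling's
sequence `n! / (√(2n) (n/e)ⁿ)` decreases from its value `e / √2` at `n = 1`, we get
`n! ≤ e √n (n/e)ⁿ`, hence `P(Λ = n) ≥ e^{n-1-λ} / √n ≥ e^{-2} / √n ≥ 1 / (9n)` as `e² < 9`.
-/

open ProbabilityTheory Real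
open scoped Nat NNReal

theorem Stirling.stirlingSeq_le_stirlingSeq_one {n : ℕ} (hn : n ≠ 0) :
    Stirling.stirlingSeq n ≤ exp 1 / √2 := by
  obtain ⟨m, rfl⟩ := Nat.exists_eq_succ_of_ne_zero hn
  simpa [Stirling.stirlingSeq_one] using Stirling.stirlingSeq'_antitone (Nat.zero_le m)

theorem factorial_le_exp_one_mul_sqrt_mul_pow {n : ℕ} (hn : n ≠ 0) :
    (n ! : ℝ) ≤ exp 1 * √n * (n / exp 1) ^ n := by
  have hpos : 0 < √(2 * n) * (n / exp 1) ^ n := by positivity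
  have h := Stirling.stirlingSeq_le_stirlingSeq_one hn
  rw [Stirling.stirlingSeq, div_le_iff₀ hpos, sqrt_mul zero_le_two] at h
  calc (n ! : ℝ) ≤ exp 1 / √2 * (√2 * √n * (n / exp 1) ^ n) := h
    _ = exp 1 * √n * (n / exp 1) ^ n := by field_simp

theorem exp_two_lt_nine : exp 2 < 9 := by
  have h := exp_one_lt_d9
  calc exp 2 = exp 1 ^ 2 := by rw [← exp_nat_mul]; norm_num
    _ < 2.7182818286 ^ 2 := by gcongr
    _ < 9 := by norm_num

theorem exp_neg_two_div_sqrt_le_poissonPMFReal {r : ℝ≥0} {n : ℕ} (hn : n ≠ 0)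
    (hnr : (n : ℝ) ≤ r) (hrn : (r : ℝ) < n + 1) :
    exp (-2) / √n ≤ poissonPMFReal r n := by
  calc exp (-2) / √n ≤ exp (n - 1 - r) / √n := by gcongr; linarith
    _ = exp (-r) * n ^ n / (exp 1 * √n * (n / exp 1) ^ n) := by
      rw [div_pow, ← exp_nat_mul, mul_one, sub_sub, exp_sub, exp_add, exp_neg]
      field_simp
    _ ≤ exp (-r) * r ^ n / n ! := by
      gcongr
      exact factorial_le_exp_one_mul_sqrt_mul_pow hn

theorem stmt15 (lam : ℝ) (hlam : 1 ≤ lam) :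
    1 / (9 * (Nat.floor lam : ℝ)) ≤
      poissonPMFReal ⟨lam, by linarith⟩ (Nat.floor lam) := by
  set n := ⌊lam⌋₊
  have hn : 1 ≤ n := Nat.le_floor (by exact_mod_cast hlam)
  have hn1 : (1 : ℝ) ≤ n := by exact_mod_cast hn
  calc 1 / (9 * (n : ℝ)) = 9⁻¹ / n := by ring
    _ ≤ exp (-2) / n := by
      gcongr
      rw [exp_neg]
      exact inv_anti₀ (exp_pos 2) exp_two_lt_nine.le
    _ ≤ exp (-2) / √n := by gcongr; exact sqrt_le_self_iff.mpr (Or.inr hn1)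
    _ ≤ _ := exp_neg_two_div_sqrt_le_poissonPMFReal (r := ⟨lam, _⟩) (by omega)
        (Nat.floor_le (by linarith)) (Nat.lt_floor_add_one lam)
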